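/- If W satisfies the minimal constraints and W·ln W, W², and W³ are integrable, then S[W] ≥ ln π + t + t²/2 + Var(X)/2, where t := 1 − μ/2, μ is the purity of W, and Var(X) := ∫ W(q,p) · (π·W(q,p) − μ/2)² dq dp. -/

import Mathlib

/-!
Apply `-ln(1 - u) ≥ u + u²/2` (the first two terms of the logarithmic series, all of whose terms
are nonnegative for `0 ≤ u < 1`) at `u = 1 - πW`, which lies in `[0, 1]` by the minimal
constraints. Multiplied by `W`, this bounds `-W ln W` below by a cubic polynomial in `W`;
integrating and using `∫ W = 1`, the right-hand side becomes `ln π + 3/2 - 2π ∫ W² + π²/2 ∫ W³`,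
which is exactly `ln π + t + t²/2 + Var(X)/2` once the variance is expanded.
-/

open Real MeasureTheory

lemma Real.log_le_sub_one_sub_sq_div_two {x : ℝ} (hx₀ : 0 < x) (hx₁ : x ≤ 1) :
    log x ≤ x - 1 - (1 - x) ^ 2 / 2 := by
  set u := 1 - x
  have hu₀ : 0 ≤ u := by linarith
  have hseries := hasSum_pow_div_log_of_abs_lt_one (x := u) (by rw [abs_of_nonneg hu₀]; linarith)
  have hpartial := sum_le_hasSum (Finset.range 2) (fun n _ => by positivity) hseries
  norm_num [Finset.sum_range_succ, u] at hpartial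
  linarith

lemma Real.cubic_le_neg_mul_log {c w : ℝ} (hc : 0 < c) (hw : 0 ≤ w) (hcw : c * w ≤ 1) :
    (log c + 3 / 2) * w - 2 * c * w ^ 2 + c ^ 2 / 2 * w ^ 3 ≤ -(w * log w) := by
  rcases hw.eq_or_lt with rfl | hw
  · simp
  have hlog := log_le_sub_one_sub_sq_div_two (mul_pos hc hw) hcw
  rw [log_mul hc.ne' hw.ne'] at hlog
  linear_combination mul_le_mul_of_nonneg_left hlog hw.le

section Moments

variable {α : Type*} [MeasurableSpace α] {μ : Measure α} {f : α → ℝ}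

lemma integral_cubic (hf : Integrable f μ) (hf₂ : Integrable (fun x => f x ^ 2) μ)
    (hf₃ : Integrable (fun x => f x ^ 3) μ) (a b c : ℝ) :
    ∫ x, (a * f x + b * f x ^ 2 + c * f x ^ 3) ∂μ
      = a * ∫ x, f x ∂μ + b * ∫ x, f x ^ 2 ∂μ + c * ∫ x, f x ^ 3 ∂μ := by
  have h₁ : Integrable (fun x => a * f x) μ := hf.const_mul a
  have h₂ : Integrable (fun x => b * f x ^ 2) μ := hf₂.const_mul b
  have h₃ : Integrable (fun x => c * f x ^ 3) μ := hf₃.const_mul c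
  rw [integral_add (f := fun x => a * f x + b * f x ^ 2) (h₁.add h₂) h₃, integral_add h₁ h₂,
    integral_const_mul, integral_const_mul, integral_const_mul]

lemma integral_mul_sub_sq (hf : Integrable f μ) (hf₂ : Integrable (fun x => f x ^ 2) μ)
    (hf₃ : Integrable (fun x => f x ^ 3) μ) (c m : ℝ) :
    ∫ x, f x * (c * f x - m) ^ 2 ∂μ
      = m ^ 2 * ∫ x, f x ∂μ - 2 * c * m * ∫ x, f x ^ 2 ∂μ + c ^ 2 * ∫ x, f x ^ 3 ∂μ := by
  calc _ = ∫ x, (m ^ 2 * f x + -(2 * c * m) * f x ^ 2 + c ^ 2 * f x ^ 3) ∂μ := by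
        congr 1 with x; ring
    _ = _ := by rw [integral_cubic hf hf₂ hf₃]; ring

lemma integral_cubic_le_integral_neg_mul_log {c : ℝ} (hc : 0 < c) (hf : Integrable f μ)
    (hf₂ : Integrable (fun x => f x ^ 2) μ) (hf₃ : Integrable (fun x => f x ^ 3) μ)
    (hflog : Integrable (fun x => f x * log (f x)) μ)
    (hpos : ∀ x, 0 ≤ f x) (hbound : ∀ x, c * f x ≤ 1) :
    (log c + 3 / 2) * ∫ x, f x ∂μ - 2 * c * ∫ x, f x ^ 2 ∂μ + c ^ 2 / 2 * ∫ x, f x ^ 3 ∂μ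
      ≤ -∫ x, f x * log (f x) ∂μ := by
  calc _ = ∫ x, ((log c + 3 / 2) * f x + -(2 * c) * f x ^ 2 + c ^ 2 / 2 * f x ^ 3) ∂μ := by
        rw [integral_cubic hf hf₂ hf₃]; ring
    _ ≤ ∫ x, -(f x * log (f x)) ∂μ :=
        integral_mono ((hf.const_mul _).add (hf₂.const_mul _) |>.add (hf₃.const_mul _))
          hflog.neg fun x => by linarith [cubic_le_neg_mul_log hc (hpos x) (hbound x)]
    _ = _ := integral_neg _

end Moments

theorem variance_refined_B2 (W : ℝ × ℝ → ℝ)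
    (hpos : ∀ z, 0 ≤ W z)
    (hnorm : ∫ z, W z = 1)
    (hbound : ∀ z, Real.pi * W z ≤ 1)
    (hlog : Integrable (fun z => W z * Real.log (W z)))
    (hsq : Integrable (fun z => (W z) ^ 2))
    (hcube : Integrable (fun z => (W z) ^ 3)) :
    (-∫ z, W z * Real.log (W z))
      ≥ Real.log Real.pi
        + (1 - (2 * Real.pi * ∫ z, (W z) ^ 2) / 2)
        + (1 - (2 * Real.pi * ∫ z, (W z) ^ 2) / 2) ^ 2 / 2
        + (∫ z, W z * (Real.pi * W z - (2 * Real.pi * ∫ w, (W w) ^ 2) / 2) ^ 2) / 2 := by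
  have hW : Integrable W := .of_integral_ne_zero (by simp [hnorm])
  have hentropy := integral_cubic_le_integral_neg_mul_log pi_pos hW hsq hcube hlog hpos hbound
  rw [hnorm] at hentropy
  rw [integral_mul_sub_sq hW hsq hcube, hnorm]
  linear_combination hentropy
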